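/- Uniform L^{q+1} bound on the corrector density: let R_q ≥ 1 be any real constant with R_q ≥ 1 + R_q^{q/(q+1)}. If (u, m, H̄) is a classical solution of the power-type ergodic MFG system, then α^q ∫_Q m^q dy ≤ α^q ∫_Q m^{q+1} dy ≤ R_q ( ∫_Q v(y) dy + α^q ). -/

import Mathlib

open MeasureTheory Real

/-- Partial derivative in direction `i`. -/
noncomputable def pd {n : ℕ} (i : Fin n) (f : (Fin n → ℝ) → ℝ) (x : Fin n → ℝ) : ℝ :=
  fderiv ℝ f x (Pi.single i 1)

/-- Laplacian: sum of second partial derivatives. -/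
noncomputable def lap {n : ℕ} (f : (Fin n → ℝ) → ℝ) (x : Fin n → ℝ) : ℝ :=
  ∑ i, pd i (pd i f) x

/-- Divergence of a vector field. -/
noncomputable def dvg {n : ℕ} (F : (Fin n → ℝ) → Fin n → ℝ) (x : Fin n → ℝ) : ℝ :=
  ∑ i, pd i (fun y => F y i) x

/-- `ℤⁿ`-periodicity. -/
def ZPeriodic {n : ℕ} (f : (Fin n → ℝ) → ℝ) : Prop :=
  ∀ (k : Fin n → ℤ) (x : Fin n → ℝ), f (x + fun i => (k i : ℝ)) = f x

/-- The unit cube `Q = [0,1]ⁿ`. -/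
def unitCube (n : ℕ) : Set (Fin n → ℝ) := Set.Icc 0 1

/-- A classical solution `(u, m, H)` of the power-type ergodic MFG system
`-Δu + ½|∇u+P|² - v - αᑫ mᑫ = H`, `-Δm - div(m(∇u+P)) = 0`, `∫ u = 0`, `∫ m = 1`. -/
structure PowerMFG {n : ℕ} (v : (Fin n → ℝ) → ℝ) (P : Fin n → ℝ) (α q : ℝ)
    (u m : (Fin n → ℝ) → ℝ) (H : ℝ) : Prop where
  hu : ContDiff ℝ 2 u
  hm : ContDiff ℝ 2 m
  hup : ZPeriodic u
  hmp : ZPeriodic m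
  hmpos : ∀ x, 0 < m x
  hHJB : ∀ x, -lap u x + (∑ i, (pd i u x + P i) ^ 2) / 2 - v x - α ^ q * (m x) ^ q = H
  hFP : ∀ x, -lap m x - dvg (fun y j => m y * (pd j u y + P j)) x = 0
  humean : (∫ y in unitCube n, u y) = 0
  hmmean : (∫ y in unitCube n, m y) = 1

lemma fderiv_shift {n : ℕ} {f : (Fin n → ℝ) → ℝ} {c x : Fin n → ℝ}
    (hf : DifferentiableAt ℝ f (x + c)) :
    fderiv ℝ (fun y => f (y + c)) x = fderiv ℝ f (x + c) := by
  have h1 : HasFDerivAt (fun y : Fin n → ℝ => y + c) (ContinuousLinearMap.id ℝ (Fin n → ℝ)) x := by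
    simpa using ((hasFDerivAt_id (𝕜 := ℝ) x).add_const c)
  have := (hf.hasFDerivAt.comp x h1).fderiv
  simpa [Function.comp_def] using this

lemma pd_periodic {n : ℕ} {f : (Fin n → ℝ) → ℝ} (hf : Differentiable ℝ f)
    (hfp : ZPeriodic f) (i : Fin n) : ZPeriodic (pd i f) := by
  intro k x
  have hfun : (fun y : Fin n → ℝ => f (y + fun j => (k j : ℝ))) = f := funext fun y => hfp k y
  have := fderiv_shift (f := f) (c := fun j => (k j : ℝ)) (x := x) (hf _)
  rw [hfun] at this
  unfold pd
  rw [← this]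

lemma contDiff_pd {n : ℕ} {f : (Fin n → ℝ) → ℝ} {k : ℕ} (hf : ContDiff ℝ (k + 1) f) (i : Fin n) :
    ContDiff ℝ k (pd i f) := by
  have h1 : ContDiff ℝ k (fderiv ℝ f) := hf.fderiv_right (by exact_mod_cast le_rfl)
  exact (ContinuousLinearMap.apply ℝ ℝ (Pi.single i 1 : Fin n → ℝ)).contDiff.comp h1

lemma insertNth_one_eq {n : ℕ} (i : Fin (n + 1)) (x : Fin n → ℝ) :
    Fin.insertNth i (1 : ℝ) x
      = Fin.insertNth i (0 : ℝ) x + fun j => (((Pi.single i 1 : Fin (n+1) → ℤ) j : ℝ)) := by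
  funext j
  rcases eq_or_ne j i with rfl | hj
  · simp
  · rcases Fin.exists_succAbove_eq hj with ⟨j', rfl⟩
    simp [Pi.single_apply, hj]

lemma integral_pd_eq_zero' {n : ℕ} (g : (Fin (n + 1) → ℝ) → ℝ) (hg : ContDiff ℝ 1 g)
    (hgp : ZPeriodic g) (i : Fin (n + 1)) :
    ∫ x in unitCube (n + 1), pd i g x = 0 := by
  have hle : (0 : Fin (n + 1) → ℝ) ≤ 1 := fun _ => zero_le_one
  have hgd : Differentiable ℝ g := hg.differentiable one_ne_zero
  set f : Fin (n + 1) → (Fin (n + 1) → ℝ) → ℝ := fun j y => if j = i then g y else 0 with hf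
  set f' : Fin (n + 1) → (Fin (n + 1) → ℝ) → (Fin (n + 1) → ℝ) →L[ℝ] ℝ :=
    fun j y => if j = i then fderiv ℝ g y else 0 with hf'
  have hsum : ∀ x : Fin (n + 1) → ℝ,
      (∑ j, f' j x (Pi.single j 1)) = pd i g x := by
    intro x
    unfold pd
    rw [Finset.sum_eq_single i]
    · simp [hf']
    · intro j _ hj; simp [hf', hj]
    · intro hmem; exact absurd (Finset.mem_univ i) hmem
  have Hc : ∀ j, ContinuousOn (f j) (Set.Icc 0 1) := by
    intro j
    rcases eq_or_ne j i with rfl | hj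
    · simp only [hf, if_pos rfl]
      exact hg.continuous.continuousOn
    · simp only [hf, if_neg hj]; exact continuousOn_const
  have Hd : ∀ x ∈ (Set.pi Set.univ fun i => Set.Ioo ((0:Fin (n+1) → ℝ) i) ((1:Fin (n+1) → ℝ) i)) \ ∅,
      ∀ j, HasFDerivAt (f j) (f' j x) x := by
    intro x _ j
    rcases eq_or_ne j i with rfl | hj
    · simp only [hf, hf', if_pos rfl]
      exact (hgd x).hasFDerivAt
    · simp only [hf, hf', if_neg hj]
      exact hasFDerivAt_const 0 x
  have Hi : IntegrableOn (fun x => ∑ j, f' j x (Pi.single j 1))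
      (Set.Icc (0 : Fin (n+1) → ℝ) 1) := by
    have : Continuous (fun x => pd i g x) := by
      have h1 : Continuous (fderiv ℝ g) := hg.continuous_fderiv one_ne_zero
      exact (ContinuousLinearMap.apply ℝ ℝ (Pi.single i 1 : Fin (n+1) → ℝ)).continuous.comp h1
    refine (IntegrableOn.congr_fun ?_ (fun x _ => (hsum x).symm) measurableSet_Icc)
    exact this.continuousOn.integrableOn_compact isCompact_Icc
  have key := MeasureTheory.integral_divergence_of_hasFDerivAt_off_countable'
    0 1 hle f f' ∅ Set.countable_empty Hc Hd Hi
  have hfront : ∀ j : Fin (n + 1), (∫ x in Set.Icc ((0:Fin (n+1)→ℝ) ∘ j.succAbove)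
        ((1:Fin (n+1)→ℝ) ∘ j.succAbove), f j (Fin.insertNth j ((1:Fin (n+1)→ℝ) j) x))
      = ∫ x in Set.Icc ((0:Fin (n+1)→ℝ) ∘ j.succAbove) ((1:Fin (n+1)→ℝ) ∘ j.succAbove),
        f j (Fin.insertNth j ((0:Fin (n+1)→ℝ) j) x) := by
    intro j
    rcases eq_or_ne j i with rfl | hj
    · refine integral_congr_ae (Filter.Eventually.of_forall fun x => ?_)
      simp only [hf, if_pos rfl, Pi.one_apply, Pi.zero_apply]
      rw [insertNth_one_eq, hgp]
    · simp [hf, hj]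
  rw [Finset.sum_eq_zero (fun j _ => by rw [hfront j, sub_self])] at key
  have : (∫ x in Set.Icc (0:Fin (n+1)→ℝ) 1, ∑ j, f' j x (Pi.single j 1))
      = ∫ x in unitCube (n+1), pd i g x := by
    refine integral_congr_ae (Filter.Eventually.of_forall fun x => hsum x)
  rw [this] at key
  exact key

lemma integral_pd_eq_zero {n : ℕ} (hn : 1 ≤ n) (g : (Fin n → ℝ) → ℝ) (hg : ContDiff ℝ 1 g)
    (hgp : ZPeriodic g) (i : Fin n) : ∫ x in unitCube n, pd i g x = 0 := by
  obtain ⟨k, rfl⟩ : ∃ k, n = k + 1 := ⟨n - 1, (Nat.succ_pred_eq_of_pos hn).symm⟩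
  exact integral_pd_eq_zero' g hg hgp i

lemma continuous_pd {n : ℕ} {f : (Fin n → ℝ) → ℝ} (hf : ContDiff ℝ 1 f) (i : Fin n) :
    Continuous (pd i f) := by
  have h1 : Continuous (fderiv ℝ f) := hf.continuous_fderiv one_ne_zero
  exact (ContinuousLinearMap.apply ℝ ℝ (Pi.single i 1 : Fin n → ℝ)).continuous.comp h1

lemma integral_dvg_eq_zero {n : ℕ} (hn : 1 ≤ n) (F : (Fin n → ℝ) → Fin n → ℝ)
    (hF : ∀ j, ContDiff ℝ 1 (fun y => F y j)) (hFp : ∀ j, ZPeriodic (fun y => F y j)) :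
    ∫ x in unitCube n, dvg F x = 0 := by
  unfold dvg
  have hsplit := MeasureTheory.integral_finset_sum (μ := volume.restrict (unitCube n))
    (Finset.univ) (f := fun j x => pd j (fun y => F y j) x) (fun j _ =>
      ((continuous_pd (hF j) j).continuousOn.integrableOn_compact isCompact_Icc))
  rw [hsplit]
  exact Finset.sum_eq_zero fun j _ => integral_pd_eq_zero hn _ (hF j) (hFp j) j

lemma pd_mul {n : ℕ} {f g : (Fin n → ℝ) → ℝ} {x : Fin n → ℝ}
    (hf : DifferentiableAt ℝ f x) (hg : DifferentiableAt ℝ g x) (i : Fin n) :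
    pd i (fun y => f y * g y) x = f x * pd i g x + g x * pd i f x := by
  unfold pd
  rw [fderiv_fun_mul hf hg]
  simp [smul_eq_mul]

lemma pd_add_const {n : ℕ} {f : (Fin n → ℝ) → ℝ} {x : Fin n → ℝ} (c : ℝ) (i : Fin n) :
    pd i (fun y => f y + c) x = pd i f x := by
  unfold pd; rw [fderiv_add_const]

lemma ZPeriodic.mul {n : ℕ} {f g : (Fin n → ℝ) → ℝ} (hf : ZPeriodic f) (hg : ZPeriodic g) :
    ZPeriodic (fun y => f y * g y) := fun k x => by simp [hf k x, hg k x]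

lemma ZPeriodic.add_const {n : ℕ} {f : (Fin n → ℝ) → ℝ} (hf : ZPeriodic f) (c : ℝ) :
    ZPeriodic (fun y => f y + c) := fun k x => by simp [hf k x]

lemma ZPeriodic.const_mul {n : ℕ} {f : (Fin n → ℝ) → ℝ} (hf : ZPeriodic f) (c : ℝ) :
    ZPeriodic (fun y => c * f y) := fun k x => by simp [hf k x]

lemma volume_unitCube {n : ℕ} : volume (unitCube n) = 1 := by
  rw [unitCube, Real.volume_Icc_pi]; simp

lemma integrableOn_unitCube {n : ℕ} {f : (Fin n → ℝ) → ℝ} (hf : Continuous f) :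
    IntegrableOn f (unitCube n) := hf.continuousOn.integrableOn_compact isCompact_Icc

lemma pd_const_mul {n : ℕ} {f : (Fin n → ℝ) → ℝ} {x : Fin n → ℝ}
    (hf : DifferentiableAt ℝ f x) (c : ℝ) (i : Fin n) :
    pd i (fun y => c * f y) x = c * pd i f x := by
  unfold pd
  rw [fderiv_const_mul hf c]
  simp

lemma contDiff_pd1 {n : ℕ} {f : (Fin n → ℝ) → ℝ} (hf : ContDiff ℝ 2 f) (i : Fin n) :
    ContDiff ℝ 1 (pd i f) := by
  have h1 : ContDiff ℝ 1 (fderiv ℝ f) := hf.fderiv_right (by norm_num)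
  exact (ContinuousLinearMap.apply ℝ ℝ (Pi.single i 1 : Fin n → ℝ)).contDiff.comp h1

lemma holder_aux {n : ℕ} {f : (Fin n → ℝ) → ℝ} (hf : Continuous f) (hf0 : ∀ x, 0 ≤ f x)
    {p p' : ℝ} (hpq : Real.HolderConjugate p p') :
    (∫ x in unitCube n, f x) ≤ (∫ x in unitCube n, f x ^ p) ^ (1 / p) := by
  haveI : IsFiniteMeasure (volume.restrict (unitCube n)) := by
    constructor
    rw [Measure.restrict_apply_univ, volume_unitCube]
    exact ENNReal.one_lt_top
  obtain ⟨C, hC⟩ := isCompact_Icc.exists_bound_of_continuousOn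
    (hf.continuousOn : ContinuousOn f (unitCube n))
  have hmem : MeasureTheory.MemLp f (ENNReal.ofReal p) (volume.restrict (unitCube n)) := by
    refine MeasureTheory.MemLp.of_bound hf.aestronglyMeasurable C ?_
    refine (MeasureTheory.ae_restrict_iff' ?_).2 (Filter.Eventually.of_forall hC)
    exact measurableSet_Icc
  have hmem1 : MeasureTheory.MemLp (fun _ : Fin n → ℝ => (1 : ℝ)) (ENNReal.ofReal p')
      (volume.restrict (unitCube n)) := MeasureTheory.memLp_const 1
  have key := MeasureTheory.integral_mul_le_Lp_mul_Lq_of_nonneg (μ := volume.restrict (unitCube n))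
    hpq (Filter.Eventually.of_forall hf0) (Filter.Eventually.of_forall fun _ => zero_le_one)
    hmem hmem1
  simp only [mul_one, Real.one_rpow] at key
  have h1 : (∫ _x in unitCube n, (1 : ℝ)) = 1 := by
    rw [MeasureTheory.setIntegral_const, measureReal_def, volume_unitCube]
    simp
  rw [h1, Real.one_rpow, mul_one] at key
  exact key


set_option maxHeartbeats 1000000 in
/-- Uniform `L^(q+1)` bound on the corrector density (power case). -/
theorem power_mfg_Lq_bound {n : ℕ} (hn : 1 ≤ n)
    (v : (Fin n → ℝ) → ℝ) (hv0 : ∀ x, 0 ≤ v x) (hvlip : ∃ K, LipschitzWith K v) (hvper : ZPeriodic v)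
    (P : Fin n → ℝ) (α q : ℝ) (hα : 0 ≤ α) (hq : 0 < q)
    (Rq : ℝ) (hRq1 : 1 ≤ Rq) (hRq : 1 + Rq ^ (q / (q + 1)) ≤ Rq)
    (u m : (Fin n → ℝ) → ℝ) (H : ℝ)
    (h : PowerMFG v P α q u m H) :
    α ^ q * (∫ y in unitCube n, (m y) ^ q)
        ≤ α ^ q * ∫ y in unitCube n, (m y) ^ (q + 1)
    ∧ α ^ q * (∫ y in unitCube n, (m y) ^ (q + 1))
        ≤ Rq * ((∫ y in unitCube n, v y) + α ^ q) := by
  obtain ⟨hu, hm, hup, hmp, hmpos, hHJB, hFP, humean, hmmean⟩ := h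
  obtain ⟨K, hvK⟩ := hvlip
  -- basic regularity facts
  have hu1 : ContDiff ℝ 1 u := hu.of_le (by norm_num)
  have hm1 : ContDiff ℝ 1 m := hm.of_le (by norm_num)
  have hud : Differentiable ℝ u := hu1.differentiable one_ne_zero
  have hmd : Differentiable ℝ m := hm1.differentiable one_ne_zero
  have hduC : ∀ j, ContDiff ℝ 1 (pd j u) := fun j => contDiff_pd1 hu j
  have hdmC : ∀ j, ContDiff ℝ 1 (pd j m) := fun j => contDiff_pd1 hm j
  have hdud : ∀ j, Differentiable ℝ (pd j u) := fun j => (hduC j).differentiable one_ne_zero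
  have hdup : ∀ j, ZPeriodic (pd j u) := fun j => pd_periodic hud hup j
  have hmb1 : ∀ j, ContDiff ℝ 1 (fun y => m y * (pd j u y + P j)) :=
    fun j => hm1.mul ((hduC j).add contDiff_const)
  have cu : Continuous u := hu.continuous
  have cm : Continuous m := hm.continuous
  have cv : Continuous v := hvK.continuous
  have cdu : ∀ j, Continuous (pd j u) := fun j => continuous_pd hu1 j
  have cdm : ∀ j, Continuous (pd j m) := fun j => continuous_pd hm1 j
  have clapu : Continuous (lap u) := by
    unfold lap
    exact continuous_finset_sum _ fun i _ => continuous_pd (hduC i) i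
  have clapm : Continuous (lap m) := by
    unfold lap
    exact continuous_finset_sum _ fun i _ => continuous_pd (hdmC i) i
  have cDV : Continuous (fun x => dvg (fun y j => m y * (pd j u y + P j)) x) := by
    unfold dvg
    exact continuous_finset_sum _ fun j _ => continuous_pd (hmb1 j) j
  have cW : Continuous (fun x => ∑ j, (pd j u x) ^ 2) :=
    continuous_finset_sum _ fun j _ => (cdu j).pow 2
  have cS : Continuous (fun x => ∑ j, P j * pd j u x) :=
    continuous_finset_sum _ fun j _ => continuous_const.mul (cdu j)
  have cT : Continuous (fun x => ∑ j, pd j m x * pd j u x) :=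
    continuous_finset_sum _ fun j _ => (cdm j).mul (cdu j)
  have cW2 : Continuous (fun x => ∑ i, (pd i u x + P i) ^ 2) :=
    continuous_finset_sum _ fun i _ => ((cdu i).add continuous_const).pow 2
  have cKf : Continuous (fun x => ∑ j, (m x * (pd j u x + P j)) * pd j u x) :=
    continuous_finset_sum _ fun j _ => (cm.mul ((cdu j).add continuous_const)).mul (cdu j)
  have cmq : Continuous (fun x => m x ^ q) :=
    cm.rpow_const fun x => Or.inl (hmpos x).ne'
  have cmq1 : Continuous (fun x => m x ^ (q + 1)) :=
    cm.rpow_const fun x => Or.inl (hmpos x).ne'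
  have intg : ∀ {f : (Fin n → ℝ) → ℝ}, Continuous f → IntegrableOn f (unitCube n) :=
    fun hf => integrableOn_unitCube hf
  have iadd : ∀ {f g : (Fin n → ℝ) → ℝ}, Continuous f → Continuous g →
      (∫ x in unitCube n, (f x + g x)) = (∫ x in unitCube n, f x) + ∫ x in unitCube n, g x :=
    fun hf hg => MeasureTheory.integral_add (intg hf) (intg hg)
  have icongr : ∀ {f g : (Fin n → ℝ) → ℝ}, (∀ x, f x = g x) →
      (∫ x in unitCube n, f x) = ∫ x in unitCube n, g x :=
    fun h => integral_congr_ae (Filter.Eventually.of_forall fun x => h x)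
  have mQ : MeasurableSet (unitCube n) := measurableSet_Icc
  have iconst : ∀ c : ℝ, (∫ _x in unitCube n, c) = c := fun c => by
    rw [MeasureTheory.setIntegral_const, measureReal_def, volume_unitCube]
    simp
  -- the divergence identities
  have I1 : (∫ x in unitCube n, lap u x) = 0 := by
    have h0 := integral_dvg_eq_zero hn (fun y j => pd j u y) (fun j => hduC j) (fun j => hdup j)
    rw [← h0]
    exact icongr fun x => rfl
  have I2 : (∫ x in unitCube n, ∑ j, P j * pd j u x) = 0 := by
    have h0 := integral_dvg_eq_zero hn (fun y j => P j * u y)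
      (fun j => contDiff_const.mul hu1) (fun j => hup.const_mul (P j))
    rw [← h0]
    refine icongr fun x => ?_
    unfold dvg
    exact Finset.sum_congr rfl fun j _ => (pd_const_mul (hud x) (P j) j).symm
  have I3 : (∫ x in unitCube n, (m x * lap u x + ∑ j, pd j m x * pd j u x)) = 0 := by
    have h0 := integral_dvg_eq_zero hn (fun y j => m y * pd j u y)
      (fun j => hm1.mul (hduC j)) (fun j => hmp.mul (hdup j))
    rw [← h0]
    refine icongr fun x => ?_
    unfold dvg lap
    rw [Finset.mul_sum, ← Finset.sum_add_distrib]
    refine Finset.sum_congr rfl fun j _ => ?_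
    rw [pd_mul (hmd x) (hdud j x) j]
    ring
  have I4 : (∫ x in unitCube n, (u x * lap m x + ∑ j, pd j m x * pd j u x)) = 0 := by
    have h0 := integral_dvg_eq_zero hn (fun y j => u y * pd j m y)
      (fun j => hu1.mul (hdmC j)) (fun j => hup.mul (pd_periodic hmd hmp j))
    rw [← h0]
    refine icongr fun x => ?_
    unfold dvg lap
    rw [Finset.mul_sum, ← Finset.sum_add_distrib]
    refine Finset.sum_congr rfl fun j _ => ?_
    rw [pd_mul (hud x) ((hdmC j).differentiable one_ne_zero x) j]
  have I5 : (∫ x in unitCube n, (u x * dvg (fun y j => m y * (pd j u y + P j)) x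
      + ∑ j, (m x * (pd j u x + P j)) * pd j u x)) = 0 := by
    have h0 := integral_dvg_eq_zero hn (fun y j => u y * (m y * (pd j u y + P j)))
      (fun j => hu1.mul (hmb1 j))
      (fun j => hup.mul (hmp.mul ((hdup j).add_const (P j))))
    rw [← h0]
    refine icongr fun x => ?_
    unfold dvg
    rw [Finset.mul_sum, ← Finset.sum_add_distrib]
    refine Finset.sum_congr rfl fun j _ => ?_
    rw [pd_mul (hud x) ((hmb1 j).differentiable one_ne_zero x) j]
  -- split the divergence identities
  have e3 : (∫ x in unitCube n, m x * lap u x)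
      + (∫ x in unitCube n, ∑ j, pd j m x * pd j u x) = 0 := by
    rw [← iadd (cm.fun_mul clapu) cT]; exact I3
  have e4 : (∫ x in unitCube n, u x * lap m x)
      + (∫ x in unitCube n, ∑ j, pd j m x * pd j u x) = 0 := by
    rw [← iadd (cu.fun_mul clapm) cT]; exact I4
  have e5 : (∫ x in unitCube n, u x * dvg (fun y j => m y * (pd j u y + P j)) x)
      + (∫ x in unitCube n, ∑ j, (m x * (pd j u x + P j)) * pd j u x) = 0 := by
    rw [← iadd (cu.fun_mul cDV) cKf]; exact I5
  have hDV : ∀ x, dvg (fun y j => m y * (pd j u y + P j)) x = -lap m x := fun x => by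
    have := hFP x; linarith
  have e6 : (∫ x in unitCube n, u x * dvg (fun y j => m y * (pd j u y + P j)) x)
      + (∫ x in unitCube n, u x * lap m x) = 0 := by
    rw [← iadd (cu.fun_mul cDV) (cu.fun_mul clapm)]
    rw [icongr (g := fun _ => (0 : ℝ)) (fun x => by rw [hDV x]; ring)]
    simp
  have eKexp : (∫ x in unitCube n, ∑ j, (m x * (pd j u x + P j)) * pd j u x)
      = (∫ x in unitCube n, m x * ∑ j, (pd j u x) ^ 2)
        + ∫ x in unitCube n, m x * ∑ j, P j * pd j u x := by
    rw [← iadd (cm.fun_mul cW) (cm.fun_mul cS)]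
    refine icongr fun x => ?_
    rw [Finset.mul_sum, Finset.mul_sum, ← Finset.sum_add_distrib]
    exact Finset.sum_congr rfl fun j _ => by ring
  -- expansion of the squared-gradient term
  have hW2 : ∀ x, (∑ i, (pd i u x + P i) ^ 2)
      = (∑ i, (pd i u x) ^ 2) + 2 * (∑ i, P i * pd i u x) + (∑ i, (P i) ^ 2) := by
    intro x
    rw [Finset.mul_sum, ← Finset.sum_add_distrib, ← Finset.sum_add_distrib]
    exact Finset.sum_congr rfl fun i _ => by ring
  -- integrated HJB equation
  have eqA : (∫ x in unitCube n, v x) + α ^ q * (∫ x in unitCube n, m x ^ q) + H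
      = ((∫ x in unitCube n, ∑ j, (pd j u x) ^ 2) + (∑ i, (P i) ^ 2)) / 2 := by
    have hpt : ∀ x, v x + α ^ q * m x ^ q + H
        = -lap u x + (∑ i, (pd i u x + P i) ^ 2) / 2 := fun x => by
      have := hHJB x; linarith
    have L : (∫ x in unitCube n, (v x + α ^ q * m x ^ q + H))
        = (∫ x in unitCube n, v x) + α ^ q * (∫ x in unitCube n, m x ^ q) + H := by
      rw [iadd (cv.fun_add (continuous_const.fun_mul cmq)) continuous_const,
        iadd cv (continuous_const.fun_mul cmq), MeasureTheory.integral_const_mul, iconst]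
    have R : (∫ x in unitCube n, (-lap u x + (∑ i, (pd i u x + P i) ^ 2) / 2))
        = ((∫ x in unitCube n, ∑ j, (pd j u x) ^ 2) + (∑ i, (P i) ^ 2)) / 2 := by
      rw [iadd clapu.fun_neg (cW2.div_const 2), MeasureTheory.integral_neg, I1, neg_zero, zero_add,
        MeasureTheory.integral_div]
      congr 1
      rw [icongr hW2,
        iadd (cW.fun_add (continuous_const.fun_mul cS)) continuous_const,
        iadd cW (continuous_const.fun_mul cS), MeasureTheory.integral_const_mul, I2, iconst]
      ring
    rw [← L, ← R]
    exact icongr hpt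
  -- integrated HJB equation multiplied by m
  have eqB : (∫ x in unitCube n, v x * m x) + α ^ q * (∫ x in unitCube n, m x ^ (q + 1)) + H
      = -(∫ x in unitCube n, m x * lap u x)
        + ((∫ x in unitCube n, m x * ∑ j, (pd j u x) ^ 2)
          + 2 * (∫ x in unitCube n, m x * ∑ j, P j * pd j u x)
          + (∑ i, (P i) ^ 2)) / 2 := by
    have hpt : ∀ x, v x * m x + α ^ q * m x ^ (q + 1) + H * m x
        = m x * (-lap u x) + (m x * ∑ i, (pd i u x + P i) ^ 2) / 2 := by
      intro x
      have h1 := hHJB x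
      have h2 : m x ^ (q + 1) = m x ^ q * m x := Real.rpow_add_one (hmpos x).ne' q
      have h3 : (-lap u x + (∑ i, (pd i u x + P i) ^ 2) / 2 - v x - α ^ q * m x ^ q) * m x
          = H * m x := by rw [h1]
      rw [h2, ← h3]; ring
    have L : (∫ x in unitCube n, (v x * m x + α ^ q * m x ^ (q + 1) + H * m x))
        = (∫ x in unitCube n, v x * m x) + α ^ q * (∫ x in unitCube n, m x ^ (q + 1)) + H := by
      rw [iadd ((cv.fun_mul cm).fun_add (continuous_const.fun_mul cmq1)) (continuous_const.fun_mul cm),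
        iadd (cv.fun_mul cm) (continuous_const.fun_mul cmq1), MeasureTheory.integral_const_mul,
        MeasureTheory.integral_const_mul, hmmean, mul_one]
    have R : (∫ x in unitCube n, (m x * (-lap u x) + (m x * ∑ i, (pd i u x + P i) ^ 2) / 2))
        = -(∫ x in unitCube n, m x * lap u x)
          + ((∫ x in unitCube n, m x * ∑ j, (pd j u x) ^ 2)
            + 2 * (∫ x in unitCube n, m x * ∑ j, P j * pd j u x)
            + (∑ i, (P i) ^ 2)) / 2 := by
      rw [iadd (cm.fun_mul clapu.fun_neg) ((cm.fun_mul cW2).div_const 2)]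
      congr 1
      · rw [← MeasureTheory.integral_neg]
        exact icongr fun x => by ring
      · rw [MeasureTheory.integral_div]
        congr 1
        rw [icongr (g := fun x => m x * (∑ j, (pd j u x) ^ 2)
            + 2 * (m x * ∑ j, P j * pd j u x) + (∑ i, (P i) ^ 2) * m x)
            (fun x => by rw [hW2 x]; ring),
          iadd ((cm.fun_mul cW).fun_add (continuous_const.fun_mul (cm.fun_mul cS)))
            (continuous_const.fun_mul cm),
          iadd (cm.fun_mul cW) (continuous_const.fun_mul (cm.fun_mul cS)),
          MeasureTheory.integral_const_mul, MeasureTheory.integral_const_mul, hmmean, mul_one]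
    have main : (∫ x in unitCube n, (v x * m x + α ^ q * m x ^ (q + 1) + H * m x))
        = ∫ x in unitCube n, (m x * (-lap u x) + (m x * ∑ i, (pd i u x + P i) ^ 2) / 2) :=
      icongr hpt
    rw [L, R] at main
    exact main
  -- nonnegativity facts
  have hVm0 : 0 ≤ ∫ x in unitCube n, v x * m x :=
    MeasureTheory.setIntegral_nonneg mQ fun x _ => mul_nonneg (hv0 x) (hmpos x).le
  have hV0 : 0 ≤ ∫ x in unitCube n, v x :=
    MeasureTheory.setIntegral_nonneg mQ fun x _ => hv0 x
  have hWW0 : 0 ≤ ∫ x in unitCube n, ∑ j, (pd j u x) ^ 2 :=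
    MeasureTheory.setIntegral_nonneg mQ fun x _ =>
      Finset.sum_nonneg fun j _ => sq_nonneg _
  have hMW0 : 0 ≤ ∫ x in unitCube n, m x * ∑ j, (pd j u x) ^ 2 :=
    MeasureTheory.setIntegral_nonneg mQ fun x _ =>
      mul_nonneg (hmpos x).le (Finset.sum_nonneg fun j _ => sq_nonneg _)
  -- the key energy inequality
  have key : α ^ q * (∫ x in unitCube n, m x ^ (q + 1))
      ≤ (∫ x in unitCube n, v x) + α ^ q * (∫ x in unitCube n, m x ^ q) := by
    linarith [e3, e4, e5, e6, eKexp, eqA, eqB, hVm0, hWW0, hMW0]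
  -- Hölder estimates
  have ha : (0:ℝ) ≤ α ^ q := Real.rpow_nonneg hα q
  have hq1 : (0:ℝ) < q + 1 := by linarith
  have hq1ne : q + 1 ≠ 0 := hq1.ne'
  have hJ0 : (0:ℝ) ≤ ∫ x in unitCube n, m x ^ (q + 1) :=
    MeasureTheory.setIntegral_nonneg mQ fun x _ => Real.rpow_nonneg (hmpos x).le _
  have hconj : Real.HolderConjugate ((q + 1) / q) (q + 1) := by
    rw [Real.holderConjugate_iff]
    constructor
    · rw [lt_div_iff₀ hq]; linarith
    · rw [inv_div]
      field_simp
  have hH1 := holder_aux cmq (fun x => Real.rpow_nonneg (hmpos x).le q) hconj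
  have hrw1 : (∫ x in unitCube n, (m x ^ q) ^ ((q + 1) / q))
      = ∫ x in unitCube n, m x ^ (q + 1) := by
    refine icongr fun x => ?_
    rw [← Real.rpow_mul (hmpos x).le]
    congr 1
    field_simp
  have hrw2 : 1 / ((q + 1) / q) = q / (q + 1) := one_div_div _ _
  rw [hrw1, hrw2] at hH1
  have hH2 := holder_aux cm (fun x => (hmpos x).le) hconj.symm
  rw [hmmean] at hH2
  have hJ1 : (1:ℝ) ≤ ∫ x in unitCube n, m x ^ (q + 1) := by
    have h3 := Real.rpow_le_rpow (by norm_num) hH2 hq1.le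
    rw [Real.one_rpow, ← Real.rpow_mul hJ0, one_div_mul_cancel hq1ne, Real.rpow_one] at h3
    exact h3
  have hIqJ : (∫ x in unitCube n, m x ^ q) ≤ ∫ x in unitCube n, m x ^ (q + 1) := by
    refine hH1.trans ?_
    have h1 : (∫ x in unitCube n, m x ^ (q + 1)) ^ (q / (q + 1))
        ≤ (∫ x in unitCube n, m x ^ (q + 1)) ^ (1:ℝ) :=
      Real.rpow_le_rpow_of_exponent_le hJ1 (by rw [div_le_one hq1]; linarith)
    rwa [Real.rpow_one] at h1
  refine ⟨mul_le_mul_of_nonneg_left hIqJ ha, ?_⟩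
  by_cases ha0 : α ^ q = 0
  · rw [ha0, zero_mul]
    have h1 : (0:ℝ) ≤ Rq := by linarith
    nlinarith [hV0]
  · have hapos : 0 < α ^ q := lt_of_le_of_ne ha (Ne.symm ha0)
    have hsum1 : 1 / (q + 1) + q / (q + 1) = 1 := by rw [← add_div, add_comm, div_self hq1ne]
    have h6 : α ^ q * (∫ x in unitCube n, m x ^ (q + 1)) ^ (q / (q + 1))
        = (α ^ q) ^ (1 / (q + 1))
          * ((α ^ q) * ∫ x in unitCube n, m x ^ (q + 1)) ^ (q / (q + 1)) := by
      calc α ^ q * (∫ x in unitCube n, m x ^ (q + 1)) ^ (q / (q + 1))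
          = (α ^ q) ^ (1 / (q + 1) + q / (q + 1))
            * (∫ x in unitCube n, m x ^ (q + 1)) ^ (q / (q + 1)) := by
            rw [hsum1, Real.rpow_one]
        _ = ((α ^ q) ^ (1 / (q + 1)) * (α ^ q) ^ (q / (q + 1)))
            * (∫ x in unitCube n, m x ^ (q + 1)) ^ (q / (q + 1)) := by
            rw [Real.rpow_add hapos]
        _ = (α ^ q) ^ (1 / (q + 1))
            * ((α ^ q) * ∫ x in unitCube n, m x ^ (q + 1)) ^ (q / (q + 1)) := by
            rw [Real.mul_rpow ha hJ0]; ring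
    have h5 : α ^ q * (∫ x in unitCube n, m x ^ q)
        ≤ α ^ q * (∫ x in unitCube n, m x ^ (q + 1)) ^ (q / (q + 1)) :=
      mul_le_mul_of_nonneg_left hH1 ha
    have hX0 : (0:ℝ) ≤ α ^ q * ∫ x in unitCube n, m x ^ (q + 1) := mul_nonneg ha hJ0
    have hA : (0:ℝ) < (∫ x in unitCube n, v x) + α ^ q := by linarith
    have hXt0 : (0:ℝ) ≤ (α ^ q * ∫ x in unitCube n, m x ^ (q + 1)) ^ (q / (q + 1)) :=
      Real.rpow_nonneg hX0 _
    have h8 : (α ^ q) ^ (1 / (q + 1))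
        ≤ ((∫ x in unitCube n, v x) + α ^ q) ^ (1 / (q + 1)) :=
      Real.rpow_le_rpow ha (by linarith) (by positivity)
    have h9 : α ^ q * (∫ x in unitCube n, m x ^ (q + 1))
        ≤ ((∫ x in unitCube n, v x) + α ^ q)
          + ((∫ x in unitCube n, v x) + α ^ q) ^ (1 / (q + 1))
            * (α ^ q * ∫ x in unitCube n, m x ^ (q + 1)) ^ (q / (q + 1)) := by
      rw [h6] at h5
      have h8' := mul_le_mul_of_nonneg_right h8 hXt0
      linarith [key, h5, h8']
    by_contra hcon
    push_neg at hcon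
    have hRpos : (0:ℝ) < Rq := by linarith
    have hXpos : (0:ℝ) < α ^ q * ∫ x in unitCube n, m x ^ (q + 1) :=
      (mul_pos hRpos hA).trans hcon
    have hAX : (∫ x in unitCube n, v x) + α ^ q
        < (α ^ q * ∫ x in unitCube n, m x ^ (q + 1)) / Rq := by
      rw [lt_div_iff₀ hRpos]; linarith
    have hRθpos : (0:ℝ) < Rq ^ (1 / (q + 1)) := Real.rpow_pos_of_pos hRpos _
    have h10 : ((∫ x in unitCube n, v x) + α ^ q) ^ (1 / (q + 1))
        ≤ (α ^ q * ∫ x in unitCube n, m x ^ (q + 1)) ^ (1 / (q + 1)) / Rq ^ (1 / (q + 1)) := by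
      rw [← Real.div_rpow hX0 hRpos.le]
      exact Real.rpow_le_rpow hA.le hAX.le (by positivity)
    have h12 : (α ^ q * ∫ x in unitCube n, m x ^ (q + 1)) ^ (1 / (q + 1))
        * (α ^ q * ∫ x in unitCube n, m x ^ (q + 1)) ^ (q / (q + 1))
        = α ^ q * ∫ x in unitCube n, m x ^ (q + 1) := by
      rw [← Real.rpow_add hXpos, hsum1, Real.rpow_one]
    have h13 : ((∫ x in unitCube n, v x) + α ^ q) ^ (1 / (q + 1))
        * (α ^ q * ∫ x in unitCube n, m x ^ (q + 1)) ^ (q / (q + 1))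
        ≤ (α ^ q * ∫ x in unitCube n, m x ^ (q + 1)) / Rq ^ (1 / (q + 1)) := by
      have := mul_le_mul_of_nonneg_right h10 hXt0
      rwa [div_mul_eq_mul_div, h12] at this
    have hmulR : Rq ^ (q / (q + 1)) * Rq ^ (1 / (q + 1)) = Rq := by
      rw [← Real.rpow_add hRpos, show q / (q + 1) + 1 / (q + 1) = 1 by rw [← add_div, div_self hq1ne],
        Real.rpow_one]
    have h16 := mul_le_mul_of_nonneg_right hRq hRθpos.le
    have h17 : (α ^ q * ∫ x in unitCube n, m x ^ (q + 1)) / Rq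
        + (α ^ q * ∫ x in unitCube n, m x ^ (q + 1)) / Rq ^ (1 / (q + 1))
        ≤ α ^ q * ∫ x in unitCube n, m x ^ (q + 1) := by
      have h18 : Rq ^ (1 / (q + 1)) + Rq ≤ Rq * Rq ^ (1 / (q + 1)) := by
        have hexp : (1 + Rq ^ (q / (q + 1))) * Rq ^ (1 / (q + 1))
            = Rq ^ (1 / (q + 1)) + Rq := by rw [add_mul, one_mul, hmulR]
        rw [hexp] at h16
        exact h16
      rw [div_add_div _ _ hRpos.ne' hRθpos.ne', div_le_iff₀ (mul_pos hRpos hRθpos)]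
      calc (α ^ q * ∫ x in unitCube n, m x ^ (q + 1)) * Rq ^ (1 / (q + 1))
            + Rq * (α ^ q * ∫ x in unitCube n, m x ^ (q + 1))
          = (α ^ q * ∫ x in unitCube n, m x ^ (q + 1)) * (Rq ^ (1 / (q + 1)) + Rq) := by ring
        _ ≤ (α ^ q * ∫ x in unitCube n, m x ^ (q + 1)) * (Rq * Rq ^ (1 / (q + 1))) :=
            mul_le_mul_of_nonneg_left h18 hX0
    linarith [h9, h13, hAX, h17]
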